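/- Let 0 < μ ≤ L, let f be μ-strongly convex with L-Lipschitz gradient on ℝⁿ, with minimizer x⋆, and let 0 < s ≤ μ/(36L²). Then the iterates of the explicit Euler scheme for the high-resolution heavy-ball ODE satisfy, for every k ≥ 0, f(x_k) − f(x⋆) ≤ ( 3sL/(1 + √(μs))² + 2μ/L + (1 + √(μs))/2 ) · L‖x₀ − x⋆‖² (1 − √(μs)/8)^k. -/

import Mathlib

/-!
Write `a = √(μs)`. The discrete energy
`E(x, v) = (1 + a)(f x - f x⋆) + ‖v‖²/4 + ‖v + 2√μ (x - x⋆)‖²/4`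
dominates `f x - f x⋆` and contracts by the factor `1 - a/8` at every Euler step once
`s ≤ μ/(36L²)`: expanding the energy at the new iterate, the descent lemma, strong convexity,
`‖∇f‖² ≤ 2L (f - f x⋆)` and two AM–GM bounds leave only terms whose coefficients are nonpositive
because `a ≤ 1/6` and `Ls ≤ a/6`. Since `∇f x⋆ = 0`, the initial energy is at most the constant of
the theorem times `L‖x₀ - x⋆‖²`.
-/

open scoped RealInnerProductSpace

section InnerProduct

variable {E : Type*} [NormedAddCommGroup E] [InnerProductSpace ℝ E]

theorem norm_smul_add_smul_sq (u w : E) (c d : ℝ) :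
    ‖c • u + d • w‖ ^ 2 = c ^ 2 * ‖u‖ ^ 2 + 2 * (c * d) * ⟪u, w⟫ + d ^ 2 * ‖w‖ ^ 2 := by
  rw [norm_add_sq_real, norm_smul, norm_smul, real_inner_smul_left, real_inner_smul_right,
    mul_pow, mul_pow, Real.norm_eq_abs, Real.norm_eq_abs, sq_abs, sq_abs]
  ring

theorem mul_inner_le_norm_sq_div_four_add (c : ℝ) (u w : E) :
    c * ⟪u, w⟫ ≤ ‖u‖ ^ 2 / 4 + c ^ 2 * ‖w‖ ^ 2 := by
  have h := norm_smul_add_smul_sq u w (1 / 2) (-c)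
  nlinarith [sq_nonneg ‖(1 / 2 : ℝ) • u + (-c) • w‖]

end InnerProduct

section LipschitzGradient

variable {E : Type*} [NormedAddCommGroup E] [InnerProductSpace ℝ E] [CompleteSpace E]
  {f : E → ℝ} {f' : E → E} {L : ℝ} {xstar : E}

theorem IsLocalMin.hasGradientAt_eq_zero {a : E} {g : E} (h : IsLocalMin f a)
    (hf : HasGradientAt f g a) : g = 0 :=
  (InnerProductSpace.toDual ℝ E).map_eq_zero_iff.mp (h.hasFDerivAt_eq_zero hf.hasFDerivAt)

theorem descent_lemma (hgrad : ∀ z, HasGradientAt f (f' z) z)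
    (hLip : ∀ z w, ‖f' z - f' w‖ ≤ L * ‖z - w‖) (z w : E) :
    f w ≤ f z + ⟪f' z, w - z⟫ + L / 2 * ‖w - z‖ ^ 2 := by
  set d := w - z
  -- the claim is `g 1 ≤ g 0`, and `g' t = ⟪f' (z + t • d) - f' z, d⟫ - L t ‖d‖² ≤ 0` for `t ≥ 0`
  let g : ℝ → ℝ := fun t => f (z + t • d) - t * ⟪f' z, d⟫ - L / 2 * t ^ 2 * ‖d‖ ^ 2
  have hg : ∀ t, HasDerivAt g (⟪f' (z + t • d), d⟫ - ⟪f' z, d⟫ - L * t * ‖d‖ ^ 2) t := by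
    intro t
    have hline : HasDerivAt (fun t : ℝ => z + t • d) d t := by
      simpa using ((hasDerivAt_id t).smul_const d).const_add z
    have hf := (hgrad (z + t • d)).hasFDerivAt.comp_hasDerivAt t hline
    have hg := (hf.sub ((hasDerivAt_id t).mul_const ⟪f' z, d⟫)).sub
      (((hasDerivAt_pow 2 t).const_mul (L / 2)).mul_const (‖d‖ ^ 2))
    rw [InnerProductSpace.toDual_apply_apply] at hg
    exact hg.congr_deriv (by norm_num only [Nat.cast_ofNat]; ring)
  have hg_nonpos : ∀ t ∈ interior (Set.Ici (0 : ℝ)),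
      ⟪f' (z + t • d), d⟫ - ⟪f' z, d⟫ - L * t * ‖d‖ ^ 2 ≤ 0 := by
    intro t ht
    rw [interior_Ici, Set.mem_Ioi] at ht
    have hdiff : ‖f' (z + t • d) - f' z‖ ≤ L * (t * ‖d‖) := by
      simpa [norm_smul, abs_of_pos ht] using hLip (z + t • d) z
    have hcs : ⟪f' (z + t • d) - f' z, d⟫ ≤ L * t * ‖d‖ ^ 2 := calc
      _ ≤ ‖f' (z + t • d) - f' z‖ * ‖d‖ := real_inner_le_norm _ _
      _ ≤ L * (t * ‖d‖) * ‖d‖ := by gcongr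
      _ = L * t * ‖d‖ ^ 2 := by ring
    rw [inner_sub_left] at hcs
    linarith
  have hanti : AntitoneOn g (Set.Ici 0) :=
    antitoneOn_of_hasDerivWithinAt_nonpos (convex_Ici 0)
      (fun t _ => (hg t).continuousAt.continuousWithinAt) (fun t _ => (hg t).hasDerivWithinAt)
      hg_nonpos
  have h10 : g 1 ≤ g 0 := hanti Set.self_mem_Ici (Set.mem_Ici.mpr zero_le_one) zero_le_one
  simp only [g, d, one_smul, zero_smul, add_zero, add_sub_cancel] at h10
  linarith

theorem sub_le_half_mul_norm_sub_sq (hgrad : ∀ z, HasGradientAt f (f' z) z)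
    (hLip : ∀ z w, ‖f' z - f' w‖ ≤ L * ‖z - w‖) (hstar : f' xstar = 0) (z : E) :
    f z - f xstar ≤ L / 2 * ‖z - xstar‖ ^ 2 := by
  have h := descent_lemma hgrad hLip xstar z
  rw [hstar, inner_zero_left] at h
  linarith

/-- The gradient step `z - L⁻¹ ∇f z` cannot go below the minimum. -/
theorem norm_sq_le_two_mul_sub (hL : 0 < L) (hgrad : ∀ z, HasGradientAt f (f' z) z)
    (hLip : ∀ z w, ‖f' z - f' w‖ ≤ L * ‖z - w‖) (hmin : ∀ z, f xstar ≤ f z) (z : E) :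
    ‖f' z‖ ^ 2 ≤ 2 * L * (f z - f xstar) := by
  have h := descent_lemma hgrad hLip z (z - L⁻¹ • f' z)
  rw [sub_sub_cancel_left, inner_neg_right, real_inner_smul_right, real_inner_self_eq_norm_sq,
    norm_neg, norm_smul, mul_pow, Real.norm_eq_abs, sq_abs] at h
  have hcoef : L / 2 * (L⁻¹ ^ 2 * ‖f' z‖ ^ 2) = L⁻¹ * ‖f' z‖ ^ 2 / 2 := by field_simp
  have h' : L⁻¹ * ‖f' z‖ ^ 2 / 2 ≤ f z - f xstar := by
    linarith [hmin (z - L⁻¹ • f' z)]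
  calc ‖f' z‖ ^ 2 = 2 * L * (L⁻¹ * ‖f' z‖ ^ 2 / 2) := by field_simp
    _ ≤ 2 * L * (f z - f xstar) := by gcongr

end LipschitzGradient

theorem heavyBall_stepSize_bounds {μ L s : ℝ} (hμ : 0 < μ) (hμL : μ ≤ L) (hs0 : 0 ≤ s)
    (hs : s ≤ μ / (36 * L ^ 2)) : √(μ * s) ≤ 1 / 6 ∧ L * s ≤ √(μ * s) / 6 := by
  have hL : 0 < L := hμ.trans_le hμL
  have h36 : 36 * L ^ 2 * s ≤ μ := by rwa [le_div_iff₀ (by positivity), mul_comm] at hs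
  constructor
  · rw [Real.sqrt_le_left (by norm_num)]
    nlinarith [mul_le_mul_of_nonneg_left h36 hμ.le, mul_le_mul hμL hμL hμ.le hL.le]
  · rw [le_div_iff₀ (by norm_num), Real.le_sqrt (by positivity) (by positivity)]
    nlinarith [mul_le_mul_of_nonneg_right h36 hs0]

/-- With `a = m r`, the inequality is the sum of `hdesc`, `hP`, `hQ`, `hG`, `hR` with weights
`1 + a`, `a (1 + a)`, `a (1 + a)`, `r² (1 + a)² / 2 + a (1 + a) r²`, `a / 8`, and of
nonnegative multiples of `A`, `B`, `F`. -/
theorem heavyBallEnergy_step_scalar {m r L F F' A B G P Q R V' W W' : ℝ}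
    (hm : 0 ≤ m) (hr : 0 ≤ r) (hmr : m * r ≤ 1 / 6) (hLr : L * r ^ 2 ≤ m * r / 6) (hF : 0 ≤ F)
    (hA : 0 ≤ A) (hB : 0 ≤ B)
    (hdesc : F' ≤ F + r * P + L / 2 * (r ^ 2 * A))
    (hP : r * P ≤ A / 4 + r ^ 2 * G)
    (hQ : F + m ^ 2 / 2 * B ≤ Q)
    (hG : G ≤ 2 * L * F)
    (hR : m * R ≤ A / 4 + m ^ 2 * B)
    (hV' : V' = (1 - 2 * (m * r)) ^ 2 * A - 2 * (1 - 2 * (m * r)) * (r * (1 + m * r)) * P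
      + (r * (1 + m * r)) ^ 2 * G)
    (hW : W = A + 4 * m * R + 4 * m ^ 2 * B)
    (hW' : W' = W - 2 * (r * (1 + m * r)) * (P + 2 * m * Q) + (r * (1 + m * r)) ^ 2 * G) :
    (1 + m * r) * F' + V' / 4 + W' / 4 ≤ (1 - m * r / 8) * ((1 + m * r) * F + A / 4 + W / 4) := by
  subst hV' hW' hW
  have ha : 0 ≤ m * r := mul_nonneg hm hr
  have hcA : 0 ≤ -((1 + m * r) * L * r ^ 2 / 2 + (m * r) ^ 2 - m * r + (m * r) * (1 + m * r) / 4
      + 3 / 32 * (m * r)) := by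
    nlinarith [mul_le_mul_of_nonneg_left hLr (by positivity : (0 : ℝ) ≤ 1 + m * r),
      mul_nonneg ha (sub_nonneg.2 hmr)]
  have hcB : 0 ≤ m ^ 2 * ((m * r) * (1 + m * r) / 2 - (m * r) / 4) := by
    nlinarith [mul_nonneg (sq_nonneg m) ha, mul_nonneg (sq_nonneg m) (mul_nonneg ha ha)]
  have hcF : 0 ≤ (1 + m * r) * (7 * (m * r) / 8 - L * r ^ 2 * (1 + 3 * (m * r))) := by
    have h : L * r ^ 2 * (1 + 3 * (m * r)) ≤ (m * r / 6) * (3 / 2) :=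
      mul_le_mul hLr (by linarith) (by positivity) (by positivity)
    nlinarith
  linarith [mul_le_mul_of_nonneg_left hdesc (by positivity : (0 : ℝ) ≤ 1 + m * r),
    mul_le_mul_of_nonneg_left hP (by positivity : (0 : ℝ) ≤ m * r * (1 + m * r)),
    mul_le_mul_of_nonneg_left hQ (by positivity : (0 : ℝ) ≤ m * r * (1 + m * r)),
    mul_le_mul_of_nonneg_left hG
      (by positivity : (0 : ℝ) ≤ r ^ 2 * (1 + m * r) ^ 2 / 2 + m * r * (1 + m * r) * r ^ 2),
    mul_le_mul_of_nonneg_left hR (by positivity : (0 : ℝ) ≤ m * r / 8),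
    mul_nonneg hcA hA, mul_nonneg hcB hB,
    mul_nonneg hcF hF]

section HeavyBall

variable {E : Type*} [NormedAddCommGroup E] [InnerProductSpace ℝ E] [CompleteSpace E]
  {f : E → ℝ} {f' : E → E} {μ L s : ℝ} {xstar : E}

noncomputable def heavyBallEnergy (μ s : ℝ) (f : E → ℝ) (xstar x v : E) : ℝ :=
  (1 + √(μ * s)) * (f x - f xstar) + ‖v‖ ^ 2 / 4 + ‖v + (2 * √μ) • (x - xstar)‖ ^ 2 / 4

omit [CompleteSpace E] in
theorem sub_le_heavyBallEnergy {x : E} (hmin : f xstar ≤ f x) (v : E) :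
    f x - f xstar ≤ heavyBallEnergy μ s f xstar x v := by
  unfold heavyBallEnergy
  nlinarith [Real.sqrt_nonneg (μ * s), sq_nonneg ‖v‖, sq_nonneg ‖v + (2 * √μ) • (x - xstar)‖]

theorem heavyBallEnergy_step (hμ : 0 < μ) (hs0 : 0 ≤ s) (hL : 0 < L)
    (hsμ : √(μ * s) ≤ 1 / 6) (hLs : L * s ≤ √(μ * s) / 6)
    (hgrad : ∀ z, HasGradientAt f (f' z) z) (hLip : ∀ z w, ‖f' z - f' w‖ ≤ L * ‖z - w‖)
    (hsc : ∀ z w, f w ≥ f z + ⟪f' z, w - z⟫ + μ / 2 * ‖w - z‖ ^ 2) (hmin : ∀ z, f xstar ≤ f z)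
    {x v x' v' : E} (hx : x' - x = √s • v)
    (hv : v' - v = -((2 * √(μ * s)) • v) - (√s * (1 + √(μ * s))) • f' x) :
    heavyBallEnergy μ s f xstar x' v' ≤ (1 - √(μ * s) / 8) * heavyBallEnergy μ s f xstar x v := by
  set m := √μ
  set r := √s
  have hmr : √(μ * s) = m * r := Real.sqrt_mul hμ.le s
  have hm2 : m ^ 2 = μ := Real.sq_sqrt hμ.le
  have hr2 : r ^ 2 = s := Real.sq_sqrt hs0
  rw [hmr] at hsμ hLs hv
  rw [← hr2] at hLs
  set c := r * (1 + m * r)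
  set w := v + (2 * m) • (x - xstar)
  have hx' : x' = x + r • v := by rw [← hx]; abel
  have hv' : v' = (1 - 2 * (m * r)) • v + (-c) • f' x := by
    rw [← sub_add_cancel v' v, hv]; module
  have hw' : v' + (2 * m) • (x' - xstar) = (1 : ℝ) • w + (-c) • f' x := by
    rw [hv', hx']; module
  have hdesc := descent_lemma hgrad hLip x x'
  rw [hx, real_inner_smul_right, real_inner_comm, norm_smul, Real.norm_eq_abs, mul_pow,
    sq_abs] at hdesc
  have hstrong := hsc x xstar
  rw [← neg_sub, inner_neg_right, norm_neg, real_inner_comm, ← hm2] at hstrong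
  unfold heavyBallEnergy
  rw [hmr]
  refine heavyBallEnergy_step_scalar (F := f x - f xstar) (F' := f x' - f xstar)
    (A := ‖v‖ ^ 2) (B := ‖x - xstar‖ ^ 2) (G := ‖f' x‖ ^ 2) (P := ⟪v, f' x⟫)
    (Q := ⟪x - xstar, f' x⟫) (R := ⟪v, x - xstar⟫) (Real.sqrt_nonneg μ) (Real.sqrt_nonneg s)
    hsμ hLs (sub_nonneg.2 (hmin x)) (sq_nonneg _) (sq_nonneg _) (by linarith)
    (mul_inner_le_norm_sq_div_four_add r v (f' x)) (by linarith)
    (norm_sq_le_two_mul_sub hL hgrad hLip hmin x) (mul_inner_le_norm_sq_div_four_add m v _)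
    ?_ ?_ ?_
  · rw [hv', norm_smul_add_smul_sq]; ring
  · have h := norm_smul_add_smul_sq v (x - xstar) 1 (2 * m)
    rw [one_smul] at h
    rw [h]; ring
  · rw [hw', norm_smul_add_smul_sq, inner_add_left, real_inner_smul_left]; ring

omit [CompleteSpace E] in
theorem heavyBallEnergy_init_le (hμ : 0 ≤ μ) (hL : 0 < L) (hs0 : 0 ≤ s)
    (hLip : ∀ z w, ‖f' z - f' w‖ ≤ L * ‖z - w‖)
    (hgap : ∀ z, f z - f xstar ≤ L / 2 * ‖z - xstar‖ ^ 2) (hstar : f' xstar = 0) (x₀ : E) :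
    heavyBallEnergy μ s f xstar x₀ (-((2 * √s / (1 + √(μ * s))) • f' x₀)) ≤
      (3 * s * L / (1 + √(μ * s)) ^ 2 + 2 * μ / L + (1 + √(μ * s)) / 2) *
        (L * ‖x₀ - xstar‖ ^ 2) := by
  set a := √(μ * s)
  set v₀ := -((2 * √s / (1 + a)) • f' x₀)
  have ha : 0 ≤ a := Real.sqrt_nonneg _
  have hgrad₀ : ‖f' x₀‖ ≤ L * ‖x₀ - xstar‖ := by simpa [hstar] using hLip x₀ xstar
  have hv₀ : ‖v₀‖ ^ 2 ≤ 4 * s / (1 + a) ^ 2 * (L ^ 2 * ‖x₀ - xstar‖ ^ 2) := by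
    rw [norm_neg, norm_smul, Real.norm_eq_abs, mul_pow, sq_abs, div_pow, mul_pow,
      Real.sq_sqrt hs0]
    have := pow_le_pow_left₀ (norm_nonneg _) hgrad₀ 2
    rw [mul_pow] at this
    norm_num
    gcongr
  have hw₀ : ‖v₀ + (2 * √μ) • (x₀ - xstar)‖ ^ 2 ≤ 2 * ‖v₀‖ ^ 2 + 8 * μ * ‖x₀ - xstar‖ ^ 2 := by
    have h := norm_smul_add_smul_sq v₀ (x₀ - xstar) 1 (2 * √μ)
    rw [one_smul] at h
    have hR := mul_inner_le_norm_sq_div_four_add (√μ) v₀ (x₀ - xstar)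
    rw [Real.sq_sqrt hμ] at hR
    rw [h, mul_pow, Real.sq_sqrt hμ]
    linarith
  have hconst : (3 * s * L / (1 + a) ^ 2 + 2 * μ / L + (1 + a) / 2) * (L * ‖x₀ - xstar‖ ^ 2)
      = (1 + a) * (L / 2 * ‖x₀ - xstar‖ ^ 2)
        + 3 / 4 * (4 * s / (1 + a) ^ 2 * (L ^ 2 * ‖x₀ - xstar‖ ^ 2))
        + 2 * μ * ‖x₀ - xstar‖ ^ 2 := by
    field_simp
    ring
  unfold heavyBallEnergy
  rw [hconst]
  nlinarith [mul_le_mul_of_nonneg_left (hgap x₀) (by positivity : (0 : ℝ) ≤ 1 + a)]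

end HeavyBall

theorem stmt12
    {n : ℕ} (μ L : ℝ) (hμ : 0 < μ) (hμL : μ ≤ L)
    (f : EuclideanSpace ℝ (Fin n) → ℝ)
    (f' : EuclideanSpace ℝ (Fin n) → EuclideanSpace ℝ (Fin n))
    (hgrad : ∀ z, HasGradientAt f (f' z) z)
    (hLip : ∀ z w, ‖f' z - f' w‖ ≤ L * ‖z - w‖)
    (hsc : ∀ z w, f w ≥ f z + ⟪f' z, w - z⟫ + μ / 2 * ‖w - z‖ ^ 2)
    (xstar : EuclideanSpace ℝ (Fin n)) (hmin : ∀ z, f xstar ≤ f z)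
    (s : ℝ) (hs0 : 0 < s) (hs : s ≤ μ / (36 * L ^ 2))
    (x v : ℕ → EuclideanSpace ℝ (Fin n))
    (hv0 : v 0 = -((2 * Real.sqrt s / (1 + Real.sqrt (μ * s))) • f' (x 0)))
    (hx : ∀ k : ℕ, x (k + 1) - x k = Real.sqrt s • v k)
    (hv : ∀ k : ℕ, v (k + 1) - v k = -((2 * Real.sqrt (μ * s)) • v k)
      - (Real.sqrt s * (1 + Real.sqrt (μ * s))) • f' (x k))
    : ∀ k : ℕ, f (x k) - f xstar ≤
      (3 * s * L / (1 + Real.sqrt (μ * s)) ^ 2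
        + 2 * μ / L + (1 + Real.sqrt (μ * s)) / 2) *
      (L * ‖x 0 - xstar‖ ^ 2) * (1 - Real.sqrt (μ * s) / 8) ^ k := by
  intro k
  have hL : 0 < L := hμ.trans_le hμL
  obtain ⟨hsμ, hLs⟩ := heavyBall_stepSize_bounds hμ hμL hs0.le hs
  have hstar : f' xstar = 0 :=
    IsLocalMin.hasGradientAt_eq_zero (Filter.Eventually.of_forall hmin) (hgrad xstar)
  have hrate : 0 ≤ 1 - √(μ * s) / 8 := by linarith
  let energy : ℕ → ℝ := fun j => heavyBallEnergy μ s f xstar (x j) (v j)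
  have hdecay : energy k ≤ (1 - √(μ * s) / 8) ^ k * energy 0 :=
    le_geom hrate k fun j _ =>
      heavyBallEnergy_step hμ hs0.le hL hsμ hLs hgrad hLip hsc hmin (hx j) (hv j)
  have hinit : energy 0 ≤ (3 * s * L / (1 + √(μ * s)) ^ 2 + 2 * μ / L + (1 + √(μ * s)) / 2) *
      (L * ‖x 0 - xstar‖ ^ 2) := by
    simp only [energy, hv0]
    exact heavyBallEnergy_init_le hμ.le hL hs0.le hLip
      (sub_le_half_mul_norm_sub_sq hgrad hLip hstar) hstar (x 0)
  calc f (x k) - f xstar ≤ energy k := sub_le_heavyBallEnergy (hmin (x k)) (v k)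
    _ ≤ (1 - √(μ * s) / 8) ^ k * energy 0 := hdecay
    _ ≤ _ := by rw [mul_comm]; gcongr
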